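/- arXiv:1610.03306 — 2 statements merged into one kernel-verified Lean document; each statement's English description precedes it below -/
import Mathlib

section
/- Let t = (m−s)/l ≥ 2. Let Γ be a simplicial complex that is a disjoint union of runs (for parameters m, l) of lengths s_1,…,s_r, and let E = E(s_1,…,s_r). Write each s_j = p_j(t+1) + d_j with p_j ≥ 0 and 0 ≤ d_j ≤ t. If d_j ∉ {1, 2} for some j, then H̃_i(E) = 0 for all i. -/
/-- An abstract simplicial complex on vertex type `V` (the empty face is always a face). -/
structure SComplex (V : Type*) where
  faces : Set (Finset V)
  empty_mem : ∅ ∈ faces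
  down_closed : ∀ ⦃σ τ : Finset V⦄, σ ∈ faces → τ ⊆ σ → τ ∈ faces

/-- Quotient of a submodule by a submodule of it (used for homology `ker/im`). -/
noncomputable def SubQuot {K : Type*} [Field K] {C : Type*} [AddCommGroup C] [Module K C]
    (S : Submodule K C) (T : Submodule K ↥S) : Type _ := ↥S ⧸ T

noncomputable instance {K : Type*} [Field K] {C : Type*} [AddCommGroup C] [Module K C]
    (S : Submodule K C) (T : Submodule K ↥S) : AddCommGroup (SubQuot S T) :=
  inferInstanceAs (AddCommGroup (↥S ⧸ T))

noncomputable instance {K : Type*} [Field K] {C : Type*} [AddCommGroup C] [Module K C]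
    (S : Submodule K C) (T : Submodule K ↥S) : Module K (SubQuot S T) :=
  inferInstanceAs (Module K (↥S ⧸ T))

namespace SComplex

variable {V : Type*}

/-- The simplicial complex generated by a given family of facets. -/
def ofFacets (F : Set (Finset V)) : SComplex V where
  faces := {τ | τ = ∅ ∨ ∃ σ ∈ F, τ ⊆ σ}
  empty_mem := Or.inl rfl
  down_closed := by
    rintro σ τ (rfl | ⟨σ', h1, h2⟩) hsub
    · exact Or.inl (Finset.subset_empty.mp hsub)
    · exact Or.inr ⟨σ', h1, hsub.trans h2⟩

/-- Union of two simplicial complexes. -/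
def union (Δ₁ Δ₂ : SComplex V) : SComplex V where
  faces := Δ₁.faces ∪ Δ₂.faces
  empty_mem := Or.inl Δ₁.empty_mem
  down_closed := by
    rintro σ τ (h | h) hs
    · exact Or.inl (Δ₁.down_closed h hs)
    · exact Or.inr (Δ₂.down_closed h hs)

/-- Intersection of two simplicial complexes. -/
def inter (Δ₁ Δ₂ : SComplex V) : SComplex V where
  faces := Δ₁.faces ∩ Δ₂.faces
  empty_mem := ⟨Δ₁.empty_mem, Δ₂.empty_mem⟩
  down_closed := fun _ _ h hs => ⟨Δ₁.down_closed h.1 hs, Δ₂.down_closed h.2 hs⟩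

variable [LinearOrder V] (Δ : SComplex V) (K : Type*) [Field K]

/-- The faces of dimension `i` (cardinality `i+1`); `i = -1` gives the empty face. -/
def Face (i : ℤ) : Type _ := {σ : Finset V // σ ∈ Δ.faces ∧ (σ.card : ℤ) = i + 1}

/-- The space of simplicial `i`-chains with coefficients in `K`
(including the empty face in degree `-1`, so that homology is reduced homology). -/
abbrev Chains (i : ℤ) : Type _ := Δ.Face i →₀ K

/-- The boundary of a single face, with the usual alternating signs determined by
the linear order on the vertices. -/
noncomputable def bd {i : ℤ} (σ : Δ.Face i) : Δ.Chains K (i - 1) :=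
  ∑ x ∈ σ.1.attach,
    Finsupp.single
      (⟨σ.1.erase x.1,
        Δ.down_closed σ.2.1 (Finset.erase_subset _ _), by
          have hx : x.1 ∈ σ.1 := x.2
          have h1 : 1 ≤ σ.1.card := Finset.card_pos.mpr ⟨x.1, hx⟩
          have h2 := σ.2.2
          rw [Finset.card_erase_of_mem hx, Nat.cast_sub h1]
          omega⟩ : Δ.Face (i - 1))
      ((-1 : K) ^ ((σ.1.filter fun y => y < x.1).card))

/-- The simplicial boundary map. -/
noncomputable def boundary (i : ℤ) : Δ.Chains K i →ₗ[K] Δ.Chains K (i - 1) :=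
  Finsupp.lsum K fun σ => LinearMap.toSpanSingleton K (Δ.Chains K (i - 1)) (Δ.bd K σ)

/-- Transport of chains along an equality of degrees. -/
noncomputable def chainsCast {i j : ℤ} (h : i = j) : Δ.Chains K i ≃ₗ[K] Δ.Chains K j :=
  h ▸ LinearEquiv.refl K (Δ.Chains K i)

/-- The `i`-th reduced simplicial homology of `Δ` with coefficients in `K`:
cycles modulo (the intersection with the) boundaries. -/
noncomputable def reducedHomology (i : ℤ) : Type _ :=
  SubQuot (LinearMap.ker (Δ.boundary K i))
    (Submodule.comap (LinearMap.ker (Δ.boundary K i)).subtype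
      (Submodule.map (Δ.chainsCast K (show i + 1 - 1 = i by ring)).toLinearMap
        (LinearMap.range (Δ.boundary K (i + 1)))))

noncomputable instance (i : ℤ) : AddCommGroup (Δ.reducedHomology K i) :=
  inferInstanceAs (AddCommGroup (SubQuot _ _))

noncomputable instance (i : ℤ) : Module K (Δ.reducedHomology K i) :=
  inferInstanceAs (Module K (SubQuot _ _))

end SComplex

/-!
The complex `E` is the union of the faces missing a facet of the `j₀`-th run and the faces
missing a facet of another run. The second part is a cone with apex any vertex of the block
`B` of the `j₀`-th run, and the first part and the intersection are joins `Q * R` of a complex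
`Q` on the vertices outside `B` with the complex `R` of subsets of `B` missing a facet of the
`j₀`-th run. By Mayer–Vietoris it therefore suffices that `Q * R` is acyclic for every `Q`.
This is proved by peeling off the windows of the run from the left: two Mayer–Vietoris steps,
with cones as the pieces, reduce a run of `n ≥ 3` windows to its last `n - (t + 1)` windows,
and a run of `0` windows gives the empty complex. Since `n mod (t + 1) ∉ {1, 2}`, the process
never stops at `1` or `2` windows.
-/

open Finset Finsupp

section FinsetChains

variable {V : Type*} [LinearOrder V] (K : Type*) [Field K]

def vertexSign (S : Finset V) (x : V) : K := (-1) ^ #{y ∈ S | y < x}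

noncomputable def faceBoundary (S : Finset V) : Finset V →₀ K :=
  ∑ x ∈ S, single (S.erase x) (vertexSign K S x)

noncomputable def chainBoundary : (Finset V →₀ K) →ₗ[K] Finset V →₀ K :=
  linearCombination K (faceBoundary K)

noncomputable def faceCone (v : V) (S : Finset V) : Finset V →₀ K :=
  if v ∈ S then 0 else single (insert v S) (vertexSign K S v)

noncomputable def chainCone (v : V) : (Finset V →₀ K) →ₗ[K] Finset V →₀ K :=
  linearCombination K (faceCone K v)

variable {K}

theorem vertexSign_mul_self (S : Finset V) (x : V) :
    vertexSign K S x * vertexSign K S x = 1 := by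
  rw [vertexSign, ← pow_add, ← two_mul, pow_mul, neg_one_sq, one_pow]

theorem vertexSign_erase {S : Finset V} {x : V} (hx : x ∈ S) (y : V) :
    vertexSign K (S.erase x) y = (if x < y then -1 else 1) * vertexSign K S y := by
  rw [vertexSign, vertexSign, filter_erase]
  split_ifs with h
  · rw [← card_erase_add_one (mem_filter.2 ⟨hx, h⟩), pow_succ, mul_neg_one, neg_mul, one_mul,
      neg_neg]
  · rw [erase_eq_of_notMem (show x ∉ {z ∈ S | z < y} from fun hc => h (mem_filter.1 hc).2),
      one_mul]

theorem vertexSign_insert {S : Finset V} {v : V} (hv : v ∉ S) (y : V) :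
    vertexSign K (insert v S) y = (if v < y then -1 else 1) * vertexSign K S y := by
  have h := vertexSign_erase (K := K) (mem_insert_self v S) y
  rw [erase_insert hv] at h
  rw [h, ← mul_assoc]
  split_ifs <;> simp

theorem ite_lt_add_ite_lt {x y : V} (h : x ≠ y) :
    (if x < y then (-1 : K) else 1) + (if y < x then -1 else 1) = 0 := by
  rcases h.lt_or_gt with h | h
  · simp [h, h.not_gt]
  · simp [h, h.not_gt]

theorem chainBoundary_single (S : Finset V) (c : K) :
    chainBoundary K (single S c) = c • faceBoundary K S :=
  linearCombination_single K c S

theorem chainCone_single (v : V) (S : Finset V) (c : K) :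
    chainCone K v (single S c) = c • faceCone K v S :=
  linearCombination_single K c S

theorem chainBoundary_faceBoundary (S : Finset V) : chainBoundary K (faceBoundary K S) = 0 := by
  have hterm : ∀ x ∈ S, chainBoundary K (single (S.erase x) (vertexSign K S x)) =
      ∑ y ∈ S.erase x,
        single ((S.erase x).erase y) (vertexSign K S x * vertexSign K (S.erase x) y) := by
    intro x _
    simp only [chainBoundary_single, faceBoundary, Finset.smul_sum, Finsupp.smul_single,
      smul_eq_mul]
  rw [faceBoundary, map_sum, sum_congr rfl hterm, ← sum_finset_product' S.offDiag _ _
    fun p => by simp only [mem_offDiag, mem_erase]; tauto]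
  -- the terms for `(x, y)` and `(y, x)` cancel
  refine sum_involution (fun p _ => p.swap) (fun p hp => ?_) (fun p hp _ => ?_)
    (fun p hp => by simpa [and_left_comm, eq_comm] using hp) (fun p _ => rfl)
  · obtain ⟨hx, hy, hxy⟩ := mem_offDiag.1 hp
    rw [Prod.fst_swap, Prod.snd_swap, erase_right_comm, ← single_add, vertexSign_erase hx,
      vertexSign_erase hy, single_eq_zero]
    linear_combination (vertexSign K S p.1 * vertexSign K S p.2) * ite_lt_add_ite_lt (K := K) hxy
  · exact fun h => (mem_offDiag.1 hp).2.2 (congrArg Prod.fst h).symm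

theorem chainBoundary_chainBoundary (f : Finset V →₀ K) :
    chainBoundary K (chainBoundary K f) = 0 := by
  induction f using Finsupp.induction_linear with
  | zero => simp
  | add f g hf hg => simp [hf, hg]
  | single S c => rw [chainBoundary_single, map_smul, chainBoundary_faceBoundary, smul_zero]

theorem chainCone_faceBoundary_of_mem {v : V} {S : Finset V} (hv : v ∈ S) :
    chainCone K v (faceBoundary K S) = single S 1 := by
  have hterm : ∀ x ∈ S, chainCone K v (single (S.erase x) (vertexSign K S x)) =
      if x = v then single S 1 else 0 := by
    intro x _
    rw [chainCone_single, faceCone]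
    split_ifs with h₁ h₂ h₂
    · exact absurd (h₂ ▸ h₁) (notMem_erase x S)
    · rw [smul_zero]
    · rw [h₂, insert_erase hv, Finsupp.smul_single, smul_eq_mul, vertexSign_erase hv,
        if_neg (lt_irrefl v), one_mul, ← h₂, vertexSign_mul_self]
    · exact absurd (mem_erase.2 ⟨Ne.symm h₂, hv⟩) h₁
  rw [faceBoundary, map_sum, sum_congr rfl hterm, sum_ite_eq' S v, if_pos hv]

theorem chainBoundary_faceCone_add_of_notMem {v : V} {S : Finset V} (hv : v ∉ S) :
    chainBoundary K (faceCone K v S) + chainCone K v (faceBoundary K S) = single S 1 := by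
  -- apart from `S` itself, the faces `insert v (S.erase x)` occur on both sides and cancel
  have hterm : ∀ x ∈ S,
      vertexSign K S v • single ((insert v S).erase x) (vertexSign K (insert v S) x) +
        chainCone K v (single (S.erase x) (vertexSign K S x)) = 0 := by
    intro x hx
    have hxv : x ≠ v := fun h => hv (h ▸ hx)
    rw [chainCone_single, faceCone, if_neg fun h => hv (mem_of_mem_erase h),
      erase_insert_of_ne hxv.symm, Finsupp.smul_single, Finsupp.smul_single, ← single_add,
      vertexSign_insert hv, vertexSign_erase hx, single_eq_zero, smul_eq_mul, smul_eq_mul]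
    linear_combination (vertexSign K S x * vertexSign K S v) * ite_lt_add_ite_lt (K := K) hxv.symm
  rw [faceCone, if_neg hv, chainBoundary_single, faceBoundary, sum_insert hv, smul_add,
    erase_insert hv, faceBoundary, map_sum, add_assoc, Finset.smul_sum, ← sum_add_distrib,
    sum_eq_zero hterm, add_zero, Finsupp.smul_single, smul_eq_mul, vertexSign_insert hv,
    if_neg (lt_irrefl v), one_mul, vertexSign_mul_self]

theorem chainBoundary_chainCone_add (v : V) (f : Finset V →₀ K) :
    chainBoundary K (chainCone K v f) + chainCone K v (chainBoundary K f) = f := by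
  have hface : ∀ S : Finset V,
      chainBoundary K (faceCone K v S) + chainCone K v (faceBoundary K S) = single S 1 := by
    intro S
    by_cases hv : v ∈ S
    · rw [faceCone, if_pos hv, map_zero, zero_add, chainCone_faceBoundary_of_mem hv]
    · exact chainBoundary_faceCone_add_of_notMem hv
  induction f using Finsupp.induction_linear with
  | zero => simp
  | add f g hf hg => simp only [map_add]; rw [add_add_add_comm, hf, hg]
  | single S c =>
    rw [chainCone_single, chainBoundary_single, map_smul, map_smul, ← smul_add, hface,
      Finsupp.smul_single, smul_eq_mul, mul_one]

theorem chainBoundary_mem_supported {P P' : Set (Finset V)}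
    (h : ∀ S ∈ P, ∀ x ∈ S, S.erase x ∈ P') {f : Finset V →₀ K} (hf : f ∈ supported K K P) :
    chainBoundary K f ∈ supported K K P' := by
  rw [chainBoundary, linearCombination_apply]
  refine Submodule.finsuppSum_mem _ _ _ _ fun S hS => Submodule.smul_mem _ _ ?_
  exact sum_mem fun x hx => single_mem_supported K _ (h S (hf (mem_support_iff.2 hS)) x hx)

theorem chainCone_mem_supported {P P' : Set (Finset V)} {v : V}
    (h : ∀ S ∈ P, v ∉ S → insert v S ∈ P') {f : Finset V →₀ K} (hf : f ∈ supported K K P) :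
    chainCone K v f ∈ supported K K P' := by
  rw [chainCone, linearCombination_apply]
  refine Submodule.finsuppSum_mem _ _ _ _ fun S hS => Submodule.smul_mem _ _ ?_
  unfold faceCone
  split_ifs with hv
  · exact zero_mem _
  · exact single_mem_supported K _ (h S (hf (mem_support_iff.2 hS)) hv)

theorem chainBoundary_filter_card (f : Finset V →₀ K) (n : ℤ) :
    chainBoundary K (f.filter fun S => (#S : ℤ) = n + 1) =
      (chainBoundary K f).filter fun S => (#S : ℤ) = n := by
  have hcard : ∀ S : Finset V, ∀ x ∈ S, (#(S.erase x) : ℤ) = #S - 1 := fun S x hx => by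
    rw [card_erase_of_mem hx, Nat.cast_sub (card_pos.2 ⟨x, hx⟩), Nat.cast_one]
  have hfilter : ∀ (p : Finset V → Prop) [DecidablePred p], f.filter p ∈ supported K K {S | p S} :=
    fun p _ S hS => (mem_filter.1 hS).2
  have h₁ := chainBoundary_mem_supported (P' := {S | (#S : ℤ) = n})
    (fun S hS x hx => by simp only [Set.mem_ofPred_eq] at hS ⊢; rw [hcard S x hx]; omega)
    (hfilter fun S => (#S : ℤ) = n + 1)
  have h₂ := chainBoundary_mem_supported (P' := {S | ¬(#S : ℤ) = n})
    (fun S hS x hx => by simp only [Set.mem_ofPred_eq] at hS ⊢; rw [hcard S x hx]; omega)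
    (hfilter fun S => ¬(#S : ℤ) = n + 1)
  conv_rhs => rw [← f.filter_add_filter_not fun S => (#S : ℤ) = n + 1, map_add, filter_add]
  rw [(filter_eq_self_iff (fun S => (#S : ℤ) = n) _).2 fun S hS => h₁ (mem_support_iff.2 hS),
    (filter_eq_zero_iff (fun S => (#S : ℤ) = n) _).2
      fun S hS => not_not.1 fun h0 => h₂ (mem_support_iff.2 h0) hS,
    add_zero]

end FinsetChains

section Acyclic

variable {V : Type*} [LinearOrder V] (K : Type*) [Field K]

/-- Acyclicity in reduced homology (the empty face is a chain too), tested on chains of all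
degrees at once. -/
def Acyclic (P : Set (Finset V)) : Prop :=
  ∀ z ∈ supported K K P, chainBoundary K z = 0 → ∃ w ∈ supported K K P, chainBoundary K w = z

variable {K}

theorem acyclic_empty : Acyclic K (∅ : Set (Finset V)) := fun z hz _ =>
  ⟨0, zero_mem _, by rw [supported_empty, Submodule.mem_bot] at hz; rw [hz, map_zero]⟩

theorem Acyclic.of_insert_mem {P : Set (Finset V)} (v : V) (h : ∀ S ∈ P, insert v S ∈ P) :
    Acyclic K P := fun z hz hbz =>
  ⟨chainCone K v z, chainCone_mem_supported (fun S hS _ => h S hS) hz, by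
    simpa [hbz] using chainBoundary_chainCone_add v z⟩

theorem IsLowerSet.chainBoundary_mem_supported {P : Set (Finset V)} (hP : IsLowerSet P)
    {f : Finset V →₀ K} (hf : f ∈ supported K K P) : chainBoundary K f ∈ supported K K P :=
  _root_.chainBoundary_mem_supported (fun S hS x _ => hP (erase_subset x S) hS) hf

theorem Acyclic.union {P Q : Set (Finset V)} (hP : IsLowerSet P) (hQ : IsLowerSet Q)
    (hP' : Acyclic K P) (hQ' : Acyclic K Q) (hPQ : Acyclic K (P ∩ Q)) : Acyclic K (P ∪ Q) := by
  classical
  intro z hz hbz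
  set a := z.filter (· ∈ P)
  have ha : a ∈ supported K K P := fun S hS => (mem_filter.1 hS).2
  have hb : z - a ∈ supported K K Q := fun S hS => by
    have hS' : z S - a S ≠ 0 := mem_support_iff.1 hS
    rw [filter_apply] at hS'
    split_ifs at hS' with hSP
    · exact absurd (sub_self _) hS'
    · exact (hz (mem_support_iff.2 (by simpa using hS'))).resolve_left hSP
  have hba : chainBoundary K a = -chainBoundary K (z - a) := by
    rw [eq_neg_iff_add_eq_zero, ← map_add, add_sub_cancel, hbz]
  have hba' : chainBoundary K a ∈ supported K K (P ∩ Q) := by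
    rw [supported_inter]
    exact ⟨hP.chainBoundary_mem_supported ha,
      hba ▸ neg_mem (hQ.chainBoundary_mem_supported hb)⟩
  obtain ⟨c, hc, hbc⟩ := hPQ _ hba' (chainBoundary_chainBoundary a)
  rw [supported_inter] at hc
  obtain ⟨x, hx, hbx⟩ := hP' (a - c) (sub_mem ha hc.1) (by rw [map_sub, hbc, sub_self])
  obtain ⟨y, hy, hby⟩ := hQ' (z - a + c) (add_mem hb hc.2)
    (by rw [map_add, hbc, hba, add_neg_cancel])
  refine ⟨x + y, add_mem (supported_mono Set.subset_union_left hx)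
    (supported_mono Set.subset_union_right hy), ?_⟩
  rw [map_add, hbx, hby]
  abel

end Acyclic

section BlockJoin

variable {V : Type*} [DecidableEq V] {B : Finset V}

/-- The join of a complex `Q` living off the block `B` with a complex `R` living on `B`. -/
def blockJoin (B : Finset V) (Q R : Set (Finset V)) : Set (Finset V) :=
  {F | F \ B ∈ Q ∧ F ∩ B ∈ R}

theorem IsLowerSet.blockJoin {Q R : Set (Finset V)} (hQ : IsLowerSet Q) (hR : IsLowerSet R) :
    IsLowerSet (blockJoin B Q R) := fun _ _ hGF hF =>
  ⟨hQ (sdiff_subset_sdiff hGF subset_rfl) hF.1, hR (inter_subset_inter hGF subset_rfl) hF.2⟩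

theorem blockJoin_inter_blockJoin (Q Q' R R' : Set (Finset V)) :
    blockJoin B Q R ∩ blockJoin B Q' R' = blockJoin B (Q ∩ Q') (R ∩ R') := by
  ext F
  exact and_and_and_comm

theorem blockJoin_union_right (Q R R' : Set (Finset V)) :
    blockJoin B Q (R ∪ R') = blockJoin B Q R ∪ blockJoin B Q R' := by
  ext F
  exact and_or_left

end BlockJoin

section JoinAcyclic

variable {V : Type*} [LinearOrder V] (K : Type*) [Field K]

def JoinAcyclic (B : Finset V) (R : Set (Finset V)) : Prop :=
  ∀ Q : Set (Finset V), IsLowerSet Q → Acyclic K (blockJoin B Q R)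

variable {K} {B : Finset V}

theorem joinAcyclic_empty : JoinAcyclic K B ∅ := fun Q _ => by
  convert acyclic_empty (K := K)
  exact Set.eq_empty_of_forall_notMem fun F hF => hF.2

theorem JoinAcyclic.of_insert_mem {R : Set (Finset V)} {v : V} (hv : v ∈ B)
    (h : ∀ A ∈ R, insert v A ∈ R) : JoinAcyclic K B R := fun _ _ =>
  Acyclic.of_insert_mem v fun F hF =>
    ⟨by rw [insert_sdiff_of_mem _ hv]; exact hF.1, by rw [insert_inter_of_mem hv]; exact h _ hF.2⟩

theorem JoinAcyclic.union {R R' : Set (Finset V)} (hR : IsLowerSet R) (hR' : IsLowerSet R')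
    (h : JoinAcyclic K B R) (h' : JoinAcyclic K B R') (hi : JoinAcyclic K B (R ∩ R')) :
    JoinAcyclic K B (R ∪ R') := fun Q hQ => by
  rw [blockJoin_union_right]
  refine (h Q hQ).union (hQ.blockJoin hR) (hQ.blockJoin hR') (h' Q hQ) ?_
  rw [blockJoin_inter_blockJoin, Set.inter_self]
  exact hi Q hQ

theorem JoinAcyclic.congr {R R' : Set (Finset V)} (h : JoinAcyclic K B R)
    (hRR' : ∀ A ⊆ B, A ∈ R ↔ A ∈ R') : JoinAcyclic K B R' := fun Q hQ => by
  convert h Q hQ using 1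
  ext F
  exact and_congr_right fun _ => (hRR' _ inter_subset_right).symm

theorem JoinAcyclic.acyclic_union_blockJoin_univ {R Q Q' : Set (Finset V)} {v : V}
    (h : JoinAcyclic K B R) (hR : IsLowerSet R) (hv : v ∈ B) (hQ : IsLowerSet Q)
    (hQ' : IsLowerSet Q') : Acyclic K (blockJoin B Q R ∪ blockJoin B Q' Set.univ) := by
  refine (h Q hQ).union (hQ.blockJoin hR) (hQ'.blockJoin isLowerSet_univ)
    (JoinAcyclic.of_insert_mem hv (fun _ _ => Set.mem_univ _) Q' hQ') ?_
  rw [blockJoin_inter_blockJoin, Set.inter_univ]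
  exact h _ (hQ.inter hQ')

end JoinAcyclic

section Run

variable (b l m n : ℕ)

def runWindow (i : ℕ) : Finset ℕ := Ico (b + i * l) (b + i * l + m)

def simplexFrom (lo : ℕ) : Set (Finset ℕ) := {A | ∀ x ∈ A, lo ≤ x}

def runTail (lo i₀ : ℕ) : Set (Finset ℕ) :=
  {A | (∀ x ∈ A, lo ≤ x) ∧ ∃ i, i₀ ≤ i ∧ i < n ∧ Disjoint A (runWindow b l m i)}

variable {b l m n} {K : Type*} [Field K]

theorem isLowerSet_simplexFrom (lo : ℕ) : IsLowerSet (simplexFrom lo) :=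
  fun _ _ hBA hA x hx => hA x (hBA hx)

theorem isLowerSet_runTail (lo i₀ : ℕ) : IsLowerSet (runTail b l m n lo i₀) :=
  fun _ _ hBA ⟨hA, i, hi, hin, hd⟩ =>
    ⟨fun x hx => hA x (hBA hx), i, hi, hin, disjoint_of_subset_left hBA hd⟩

theorem isLowerSet_setOf_disjoint_runWindow :
    IsLowerSet {A : Finset ℕ | ∃ i < n, Disjoint A (runWindow b l m i)} :=
  fun _ _ hBA ⟨i, hi, hd⟩ => ⟨i, hi, disjoint_of_subset_left hBA hd⟩

theorem runTail_eq_empty {lo i₀ : ℕ} (h : n ≤ i₀) : runTail b l m n lo i₀ = ∅ :=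
  Set.eq_empty_of_forall_notMem fun _ ⟨_, _, hi, hin, _⟩ => by omega

theorem simplexFrom_inter_runTail {lo lo' : ℕ} (h : lo ≤ lo') (i₀ : ℕ) :
    simplexFrom lo' ∩ runTail b l m n lo i₀ = runTail b l m n lo' i₀ := by
  ext A
  exact ⟨fun ⟨hA, _, hi⟩ => ⟨hA, hi⟩, fun ⟨hA, hi⟩ => ⟨hA, fun x hx => h.trans (hA x hx), hi⟩⟩

theorem le_of_disjoint_runWindow {A : Finset ℕ} {i : ℕ} (hA : ∀ x ∈ A, b + i * l ≤ x)
    (hd : Disjoint A (runWindow b l m i)) : ∀ x ∈ A, b + i * l + m ≤ x := fun x hx => by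
  have := disjoint_left.1 hd hx
  simp only [runWindow, mem_Ico, not_and, not_lt] at this
  exact this (hA x hx)

theorem disjoint_runWindow_of_le {A : Finset ℕ} {i : ℕ} (hA : ∀ x ∈ A, b + i * l + m ≤ x) :
    Disjoint A (runWindow b l m i) :=
  disjoint_left.2 fun x hx hxW => by
    have := hA x hx
    simp only [runWindow, mem_Ico] at hxW
    omega

/-- A face above `lo` that misses a window starting at or below `lo` lies above that window,
hence above window `i₀`. -/
theorem runTail_eq_simplexFrom_union {lo i₀ k : ℕ} (hi₀ : i₀ < n)
    (hlo : b + (i₀ + k) * l ≤ lo + l) (hlo' : lo ≤ b + i₀ * l + m) :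
    runTail b l m n lo i₀ = simplexFrom (b + i₀ * l + m) ∪ runTail b l m n lo (i₀ + k) := by
  ext A
  constructor
  · rintro ⟨hA, i, hi, hin, hd⟩
    by_cases hik : i < i₀ + k
    · have h₁ : (i + 1) * l ≤ (i₀ + k) * l := Nat.mul_le_mul_right l hik
      have h₂ : i₀ * l ≤ i * l := Nat.mul_le_mul_right l hi
      rw [add_one_mul] at h₁
      have h := le_of_disjoint_runWindow (fun x hx => by linarith [hA x hx]) hd
      exact Or.inl fun x hx => by linarith [h x hx]
    · exact Or.inr ⟨hA, i, by omega, hin, hd⟩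
  · rintro (hA | ⟨hA, i, hi, hin, hd⟩)
    · exact ⟨fun x hx => hlo'.trans (hA x hx), i₀, le_rfl, hi₀, disjoint_runWindow_of_le hA⟩
    · exact ⟨hA, i, by omega, hin, hd⟩

theorem joinAcyclic_simplexFrom {B : Finset ℕ} {lo : ℕ} (hlo : lo ∈ B) :
    JoinAcyclic K B (simplexFrom lo) :=
  .of_insert_mem hlo fun _ hA x hx => by
    rcases mem_insert.1 hx with rfl | hx
    exacts [le_rfl, hA x hx]

theorem joinAcyclic_runTail_of_lt {B : Finset ℕ} {lo i₀ : ℕ} (hlo : lo ∈ B)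
    (h : lo < b + i₀ * l) : JoinAcyclic K B (runTail b l m n lo i₀) :=
  .of_insert_mem hlo fun _ ⟨hA, i, hi, hin, hd⟩ => by
    have : i₀ * l ≤ i * l := Nat.mul_le_mul_right l hi
    refine ⟨fun x hx => ?_, i, hi, hin, disjoint_insert_left.2 ⟨?_, hd⟩⟩
    · rcases mem_insert.1 hx with rfl | hx
      exacts [le_rfl, hA x hx]
    · simp only [runWindow, mem_Ico]
      omega

section Step

variable {B : Finset ℕ} {t s : ℕ} (hB : ∀ i < n, runWindow b l m i ⊆ B) (hm : m = t * l + s)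
  (hs : s < l)
include hB hm hs

/-- The tail from `i₀` is the union of two cones, the faces above window `i₀` and the tail from
`i₀ + 1`; their intersection is again the union of two cones, the faces above window `i₀ + 1`
and the tail from `i₀ + 1 + t` above window `i₀`, whose intersection is the tail from
`i₀ + 1 + t` above window `i₀ + 1`. -/
theorem JoinAcyclic.runTail_of_runTail {i₀ lo : ℕ} (ht : 0 < t) (hn : i₀ + 3 ≤ n)
    (hlo : b + i₀ * l ≤ lo) (hlo' : lo ≤ b + i₀ * l + s)
    (ih : JoinAcyclic K B (runTail b l m n (b + (i₀ + 1) * l + m) (i₀ + 1 + t))) :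
    JoinAcyclic K B (runTail b l m n lo i₀) := by
  have hmem : ∀ i < n, ∀ x, b + i * l ≤ x → x < b + i * l + m → x ∈ B :=
    fun i hi x h₁ h₂ => hB i hi (mem_Ico.2 ⟨h₁, h₂⟩)
  have h₁ : (i₀ + 1) * l = i₀ * l + l := add_one_mul i₀ l
  have h₂ : (i₀ + 2) * l = i₀ * l + l + l := by ring
  have h₃ : (i₀ + 1 + t) * l = i₀ * l + l + t * l := by ring
  have hlm : l ≤ t * l := Nat.le_mul_of_pos_left l ht
  rw [runTail_eq_simplexFrom_union (k := 1) (by omega) (by omega) (by omega)]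
  refine .union (isLowerSet_simplexFrom _) (isLowerSet_runTail _ _)
    (joinAcyclic_simplexFrom (hmem (i₀ + 1) (by omega) _ (by omega) (by omega)))
    (joinAcyclic_runTail_of_lt (hmem i₀ (by omega) _ hlo (by omega)) (by omega)) ?_
  rw [simplexFrom_inter_runTail (by omega), runTail_eq_simplexFrom_union (k := t) (by omega)
    (by omega) (by omega)]
  refine .union (isLowerSet_simplexFrom _) (isLowerSet_runTail _ _)
    (joinAcyclic_simplexFrom (hmem (i₀ + 2) (by omega) _ (by omega) (by omega)))
    (joinAcyclic_runTail_of_lt (hmem (i₀ + 1) (by omega) _ (by omega) (by omega)) (by omega)) ?_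
  rwa [simplexFrom_inter_runTail (by omega)]

theorem joinAcyclic_runTail (ht : 2 ≤ t) (i₀ lo : ℕ) (h₁ : (n - i₀) % (t + 1) ≠ 1)
    (h₂ : (n - i₀) % (t + 1) ≠ 2) (hlo : b + i₀ * l ≤ lo) (hlo' : lo ≤ b + i₀ * l + s) :
    JoinAcyclic K B (runTail b l m n lo i₀) := by
  induction hk : n - i₀ using Nat.strong_induction_on generalizing i₀ lo with
  | _ k ih =>
  subst hk
  rcases Nat.eq_zero_or_pos (n - i₀) with hk0 | hk0
  · rw [runTail_eq_empty (by omega)]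
    exact joinAcyclic_empty
  have h3 : 3 ≤ n - i₀ := by
    by_contra h
    rw [Nat.mod_eq_of_lt (by omega)] at h₁ h₂
    omega
  have hmod : ∀ c ≠ 0, (n - i₀) % (t + 1) ≠ c → (n - (i₀ + 1 + t)) % (t + 1) ≠ c := by
    intro c hc h
    rcases le_or_gt (t + 1) (n - i₀) with hle | hlt
    · rwa [show n - (i₀ + 1 + t) = n - i₀ - (t + 1) by omega, ← Nat.mod_eq_sub_mod hle]
    · rwa [show n - (i₀ + 1 + t) = 0 by omega, Nat.zero_mod, ne_comm]
  have h₃ : (i₀ + 1 + t) * l = (i₀ + 1) * l + t * l := by ring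
  exact .runTail_of_runTail hB hm hs (by omega) (by omega) hlo hlo'
    (ih _ (by omega) _ _ (hmod 1 one_ne_zero h₁) (hmod 2 two_ne_zero h₂) (by omega) (by omega) rfl)

theorem joinAcyclic_run (hBb : ∀ x ∈ B, b ≤ x) (ht : 2 ≤ t) (h₁ : n % (t + 1) ≠ 1)
    (h₂ : n % (t + 1) ≠ 2) : JoinAcyclic K B {A | ∃ i < n, Disjoint A (runWindow b l m i)} :=
  (joinAcyclic_runTail hB hm hs ht 0 b h₁ h₂ (by simp) (by simp)).congr fun _ hA =>
    ⟨fun ⟨_, i, _, hi, hd⟩ => ⟨i, hi, hd⟩,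
      fun ⟨i, hi, hd⟩ => ⟨fun x hx => hBb x (hA hx), i, Nat.zero_le i, hi, hd⟩⟩

end Step

end Run

section RunLayout

variable {l m : ℕ} {o sl : ℕ → ℕ} (ho : ∀ j, o (j + 1) = o j + (sl j - 1) * l + m)
include ho

theorem monotone_of_runLayout : Monotone o :=
  monotone_nat_of_le_succ fun j => by rw [ho j]; omega

theorem Ico_subset_range_of_runLayout {j r : ℕ} (hj : j < r) :
    Ico (o j) (o (j + 1)) ⊆ range (o r) := by
  rw [range_eq_Ico]
  exact Ico_subset_Ico (Nat.zero_le _) (monotone_of_runLayout ho hj)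

theorem runWindow_subset_Ico {j i : ℕ} (hi : i < sl j) :
    runWindow (o j) l m i ⊆ Ico (o j) (o (j + 1)) := by
  have : i * l ≤ (sl j - 1) * l := Nat.mul_le_mul_right l (by omega)
  rw [ho j]
  exact Ico_subset_Ico (by omega) (by omega)

theorem disjoint_runWindow_Ico {j j₀ i : ℕ} (hne : j ≠ j₀) (hi : i < sl j) :
    Disjoint (runWindow (o j) l m i) (Ico (o j₀) (o (j₀ + 1))) := by
  refine disjoint_of_subset_left (runWindow_subset_Ico ho hi) ?_
  simpa [← coe_Ico, disjoint_coe, Function.onFun] using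
    (monotone_of_runLayout ho).pairwise_disjoint_on_Ico_succ hne

end RunLayout

namespace SComplex

section Transfer

variable {V : Type*} {K : Type*} [Field K] (E : SComplex V)

noncomputable def toFinsetChains (i : ℤ) : E.Chains K i →ₗ[K] Finset V →₀ K :=
  lmapDomain K K fun σ : E.Face i => σ.1

theorem toFinsetChains_injective (i : ℤ) : Function.Injective (E.toFinsetChains (K := K) i) :=
  mapDomain_injective Subtype.val_injective

theorem range_toFinsetChains (i : ℤ) :
    LinearMap.range (E.toFinsetChains (K := K) i) =
      supported K K {S | S ∈ E.faces ∧ (#S : ℤ) = i + 1} := by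
  rw [toFinsetChains, LinearMap.range_eq_map, ← supported_univ, lmapDomain_supported,
    Set.image_univ]
  exact congrArg _ Subtype.range_coe

theorem toFinsetChains_chainsCast {i j : ℤ} (h : i = j) (z : E.Chains K i) :
    E.toFinsetChains j (E.chainsCast K h z) = E.toFinsetChains i z := by
  subst h
  rfl

variable [LinearOrder V]

theorem toFinsetChains_boundary (i : ℤ) (z : E.Chains K i) :
    E.toFinsetChains (i - 1) (E.boundary K i z) = chainBoundary K (E.toFinsetChains i z) := by
  induction z using Finsupp.induction_linear with
  | zero => simp
  | add f g hf hg => simp only [map_add, hf, hg]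
  | single σ c =>
    simp only [boundary, toFinsetChains, lsum_single, LinearMap.toSpanSingleton_apply, map_smul,
      lmapDomain_apply, mapDomain_single, chainBoundary_single, bd, faceBoundary,
      mapDomain_finsetSum]
    rw [← sum_attach σ.1]
    exact congrArg _ (sum_congr rfl fun x _ => mapDomain_single)

theorem reducedHomology_subsingleton_of_acyclic (h : Acyclic K E.faces) (i : ℤ) :
    Subsingleton (E.reducedHomology K i) := by
  unfold reducedHomology SubQuot
  refine Submodule.Quotient.subsingleton_iff.2 (Submodule.comap_subtype_eq_top.2 fun z hz => ?_)
  have hz' : E.toFinsetChains i z ∈ supported K K {S | S ∈ E.faces ∧ (#S : ℤ) = i + 1} :=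
    range_toFinsetChains (K := K) E i ▸ LinearMap.mem_range_self _ z
  obtain ⟨w, hw, hwz⟩ := h _ (supported_mono (fun _ hS => hS.1) hz')
    (by rw [← toFinsetChains_boundary, LinearMap.mem_ker.1 hz, map_zero])
  -- only the part of `w` in degree `i + 1` is needed
  obtain ⟨w', hw'⟩ : w.filter (fun S => (#S : ℤ) = i + 1 + 1) ∈
      LinearMap.range (E.toFinsetChains (K := K) (i + 1)) := by
    rw [range_toFinsetChains]
    exact fun S hS => ⟨hw (mem_filter.1 hS).1, (mem_filter.1 hS).2⟩
  refine ⟨E.boundary K (i + 1) w', LinearMap.mem_range_self _ _, toFinsetChains_injective E i ?_⟩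
  rw [LinearEquiv.coe_coe, toFinsetChains_chainsCast, toFinsetChains_boundary, hw',
    chainBoundary_filter_card, hwz,
    (filter_eq_self_iff _ _).2 fun S hS => (hz' (mem_support_iff.2 hS)).2]

end Transfer

section Complement

variable {V : Type*} [DecidableEq V] {Y B : Finset V} {G : ℕ → ℕ → Finset V} {r j₀ : ℕ}
  {sl : ℕ → ℕ}

theorem mem_faces_ofFacets_sdiff_iff (hj₀ : j₀ < r) (hsl : 0 < sl j₀) {F : Finset V} :
    F ∈ (ofFacets {A | ∃ j < r, ∃ i < sl j, A = Y \ G j i}).faces ↔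
      F ⊆ Y ∧ ∃ j < r, ∃ i < sl j, Disjoint F (G j i) := by
  constructor
  · rintro (rfl | ⟨_, ⟨j, hj, i, hi, rfl⟩, hF⟩)
    · exact ⟨empty_subset _, j₀, hj₀, 0, hsl, disjoint_empty_left _⟩
    · exact ⟨hF.trans sdiff_subset, j, hj, i, hi, (subset_sdiff.1 hF).2⟩
  · rintro ⟨hFY, j, hj, i, hi, hd⟩
    exact Or.inr ⟨_, ⟨j, hj, i, hi, rfl⟩, subset_sdiff.2 ⟨hFY, hd⟩⟩

theorem faces_ofFacets_sdiff_eq (hj₀ : j₀ < r) (hsl : 0 < sl j₀) (hBY : B ⊆ Y)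
    (hin : ∀ i < sl j₀, G j₀ i ⊆ B) (hout : ∀ j ≠ j₀, ∀ i < sl j, Disjoint (G j i) B) :
    (ofFacets {A | ∃ j < r, ∃ i < sl j, A = Y \ G j i}).faces =
      blockJoin B {σ | σ ⊆ Y} {A | ∃ i < sl j₀, Disjoint A (G j₀ i)} ∪
        blockJoin B {σ | σ ⊆ Y ∧ ∃ j < r, j ≠ j₀ ∧ ∃ i < sl j, Disjoint σ (G j i)} Set.univ := by
  ext F
  have hY : F ⊆ Y ↔ F \ B ⊆ Y := ⟨sdiff_subset.trans, fun h x hx =>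
    if hxB : x ∈ B then hBY hxB else h (mem_sdiff.2 ⟨hx, hxB⟩)⟩
  have hin' : ∀ i < sl j₀, Disjoint F (G j₀ i) ↔ Disjoint (F ∩ B) (G j₀ i) := fun i hi =>
    ⟨(·.mono_left inter_subset_left), fun h => disjoint_left.2 fun _ hxF hxG =>
      disjoint_left.1 h (mem_inter.2 ⟨hxF, hin i hi hxG⟩) hxG⟩
  have hout' : ∀ j ≠ j₀, ∀ i < sl j, Disjoint F (G j i) ↔ Disjoint (F \ B) (G j i) :=
    fun j hj i hi => ⟨(·.mono_left sdiff_subset), fun h => disjoint_left.2 fun _ hxF hxG =>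
      disjoint_left.1 h (mem_sdiff.2 ⟨hxF, disjoint_left.1 (hout j hj i hi) hxG⟩) hxG⟩
  rw [mem_faces_ofFacets_sdiff_iff hj₀ hsl]
  constructor
  · rintro ⟨hFY, j, hj, i, hi, hd⟩
    rcases eq_or_ne j j₀ with rfl | hne
    · exact Or.inl ⟨hY.1 hFY, i, hi, (hin' i hi).1 hd⟩
    · exact Or.inr ⟨⟨hY.1 hFY, j, hj, hne, i, hi, (hout' j hne i hi).1 hd⟩, trivial⟩
  · rintro (⟨hFY, i, hi, hd⟩ | ⟨⟨hFY, j, hj, hne, i, hi, hd⟩, -⟩)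
    · exact ⟨hY.2 hFY, j₀, hj₀, i, hi, (hin' i hi).2 hd⟩
    · exact ⟨hY.2 hFY, j, hj, i, hi, (hout' j hne i hi).2 hd⟩

end Complement

end SComplex

theorem runs_complement_homology_vanishing_general
    (K : Type*) [Field K] (l m s t : ℕ)
    (hl : 0 < l) (hlm : l < m)
    (hs : s = m % l) (ht : t = (m - s) / l) (ht2 : 2 ≤ t)
    (r : ℕ) (sl : ℕ → ℕ) (hsl : ∀ j < r, 1 ≤ sl j)
    (p d : ℕ → ℕ) (hpd : ∀ j < r, sl j = p j * (t + 1) + d j ∧ d j ≤ t)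
    (j₀ : ℕ) (hj₀ : j₀ < r) (hd1 : d j₀ ≠ 1) (hd2 : d j₀ ≠ 2)
    (o : ℕ → ℕ) (ho : ∀ j, o (j + 1) = o j + (sl j - 1) * l + m)
    (G : ℕ → ℕ → Finset ℕ)
    (hG : ∀ j i, G j i = (Finset.range m).image fun q => o j + i * l + q)
    (E : SComplex ℕ)
    (hE : E = SComplex.ofFacets
      {A | ∃ j < r, ∃ i < sl j, A = Finset.range (o r) \ G j i}) :
    ∀ i : ℤ, Subsingleton (E.reducedHomology K i) := by
  have hm : m = t * l + s := by
    have := Nat.div_add_mod m l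
    rw [ht, hs, show m - m % l = l * (m / l) by omega, Nat.mul_div_cancel_left _ hl,
      Nat.div_add_mod']
  have hd : sl j₀ % (t + 1) = d j₀ := by
    rw [(hpd j₀ hj₀).1, Nat.mul_add_mod_of_lt (Nat.lt_succ_of_le (hpd j₀ hj₀).2)]
  obtain rfl : G = fun j i => runWindow (o j) l m i := funext₂ fun j i => by
    rw [hG, runWindow, range_eq_Ico, image_add_left_Ico, add_zero]
  have hv : o j₀ ∈ Ico (o j₀) (o (j₀ + 1)) := left_mem_Ico.2 (by rw [ho]; omega)
  intro i
  refine E.reducedHomology_subsingleton_of_acyclic ?_ i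
  rw [hE, SComplex.faces_ofFacets_sdiff_eq hj₀ (hsl j₀ hj₀) (Ico_subset_range_of_runLayout ho hj₀)
    (fun i => runWindow_subset_Ico ho) fun j hj i => disjoint_runWindow_Ico ho hj]
  refine (joinAcyclic_run (fun i => runWindow_subset_Ico ho) hm (hs ▸ Nat.mod_lt m hl)
    (fun x hx => (mem_Ico.1 hx).1) ht2 (hd ▸ hd1) (hd ▸ hd2)).acyclic_union_blockJoin_univ
    isLowerSet_setOf_disjoint_runWindow hv (isLowerSet_Iic _) ?_
  exact fun _ _ hτσ ⟨hσ, j, hj, hne, i, hi, hdisj⟩ =>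
    ⟨hτσ.trans hσ, j, hj, hne, i, hi, disjoint_of_subset_left hτσ hdisj⟩

/-- Proposition 4.4(4).  Let `l < m` with `s = m mod l` and
`t = (m-s)/l ≥ 2`.  Let `Γ` be a disjoint union of runs (for parameters `m, l`) of lengths
`s₁, ..., s_r`, let `E = E(s₁, ..., s_r)` be the complement complex of `Γ` inside its vertex
set, and write `s_j = p_j (t+1) + d_j` with `p_j ≥ 0`, `0 ≤ d_j ≤ t`.  If `d_j ∉ {1, 2}` for
some `j`, then `H̃ᵢ(E) = 0` for all `i`.  The `j`-th run (of length `sl j ≥ 1`) is realised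
on the vertex block `[o j, o (j+1))` of `ℕ` with facets
`G j i = {o j + i*l, ..., o j + i*l + m - 1}`, `0 ≤ i < sl j`. -/
theorem runs_complement_homology_vanishing
    (K : Type*) [Field K] (l m s t : ℕ)
    (hl : 0 < l) (hlm : l < m)
    (hs : s = m % l) (ht : t = (m - s) / l) (ht2 : 2 ≤ t)
    (r : ℕ) (hr : 1 ≤ r) (sl : ℕ → ℕ) (hsl : ∀ j < r, 1 ≤ sl j)
    (p d : ℕ → ℕ) (hpd : ∀ j < r, sl j = p j * (t + 1) + d j ∧ d j ≤ t)
    (j₀ : ℕ) (hj₀ : j₀ < r) (hd1 : d j₀ ≠ 1) (hd2 : d j₀ ≠ 2)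
    (o : ℕ → ℕ) (ho0 : o 0 = 0) (ho : ∀ j, o (j + 1) = o j + (sl j - 1) * l + m)
    (G : ℕ → ℕ → Finset ℕ)
    (hG : ∀ j i, G j i = (Finset.range m).image fun q => o j + i * l + q)
    (E : SComplex ℕ)
    (hE : E = SComplex.ofFacets
      {A | ∃ j < r, ∃ i < sl j, A = Finset.range (o r) \ G j i}) :
    ∀ i : ℤ, Subsingleton (E.reducedHomology K i) :=
  runs_complement_homology_vanishing_general K l m s t hl hlm hs ht ht2 r sl hsl p d hpd j₀ hj₀ hd1
    hd2 o ho G hG E hE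
end

section
/- Let Γ be a proper induced subcollection of Δ_{m,l}(C_n) on a proper subset U of the vertex set, and suppose Γ is connected. Then Γ is a run, i.e. the path complex of a line graph, whose facet set is {F_i : F_i a facet of Δ_{m,l}(C_n) with supp(F_i) ⊆ U}. -/
/-!
Cut the cycle of facets just after a facet `F b` not contained in `U`; one exists because
`l < m` makes consecutive facets overlap, so the facets cover the vertex set, while `U` is proper.
Two facets that meet are at cyclic distance `d` with `d * l < m` in one of the two directions,
and then every facet between them in that direction lies in their union. The direction passing
through `F b` is therefore impossible, so in the linear order of positions after the cut every
edge of `Γ` spans an interval of facets of `Γ`. By connectivity the positions of the facets of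
`Γ` form an interval, which misses the last position, that of `F b`.
-/

open Finset

/-- The facet `F (j + 1)` of `Δ_{m,l}(C_n)`, on the vertex set `{0, …, n - 1}`. -/
def cycleFacet (l m n j : ℕ) : Finset ℕ := (range m).image fun q => (j * l + q) % n

section Facets

variable {l m n : ℕ}

theorem mem_cycleFacet {j x : ℕ} :
    x ∈ cycleFacet l m n j ↔ ∃ q < m, (j * l + q) % n = x := by
  simp [cycleFacet]

theorem cycleFacet_congr {k i j : ℕ} (h : i ≡ j [MOD k]) :
    cycleFacet l m (k * l) i = cycleFacet l m (k * l) j := by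
  unfold cycleFacet
  congr! 2 with q
  exact (h.mul_right' l).add_right q

theorem mem_cycleFacet_div {v : ℕ} (hl : 0 < l) (hlm : l ≤ m) (hv : v < n) :
    v ∈ cycleFacet l m n (v / l) :=
  mem_cycleFacet.2 ⟨v % l, (Nat.mod_lt v hl).trans_le hlm, by
    rw [Nat.div_add_mod', Nat.mod_eq_of_lt hv]⟩

theorem cycleFacet_subset_union {i j j' : ℕ} (hij : i ≤ j) (hjj' : j ≤ j')
    (h : (j' - i) * l ≤ m) :
    cycleFacet l m n j ⊆ cycleFacet l m n i ∪ cycleFacet l m n j' := by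
  intro x hx
  obtain ⟨q, hq, rfl⟩ := mem_cycleFacet.1 hx
  have hil : i * l ≤ j * l := Nat.mul_le_mul_right l hij
  have hjl : j * l ≤ j' * l := Nat.mul_le_mul_right l hjj'
  rw [Nat.sub_mul] at h
  rcases lt_or_ge (j * l + q) (i * l + m) with hlt | hge
  · refine mem_union_left _ (mem_cycleFacet.2 ⟨j * l + q - i * l, by omega, ?_⟩)
    rw [Nat.add_sub_cancel' (by omega)]
  · refine mem_union_right _ (mem_cycleFacet.2 ⟨j * l + q - j' * l, by omega, ?_⟩)
    rw [Nat.add_sub_cancel' (by omega)]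

theorem lt_or_lt_of_cycleFacet_inter_nonempty {k i j : ℕ} (hmn : m ≤ k * l) (hij : i ≤ j)
    (hji : j < i + k)
    (h : (cycleFacet l m (k * l) i ∩ cycleFacet l m (k * l) j).Nonempty) :
    (j - i) * l < m ∨ (i + k - j) * l < m := by
  obtain ⟨x, hx⟩ := h
  rw [mem_inter, mem_cycleFacet, mem_cycleFacet] at hx
  obtain ⟨⟨q, hq, hqx⟩, r, hr, hrx⟩ := hx
  have hd : (j - i) * l + l ≤ k * l := by
    rw [← Nat.succ_mul]; exact Nat.mul_le_mul_right l (by omega)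
  have hwrap : (i + k - j) * l = k * l - (j - i) * l := by
    rw [← Nat.sub_mul]; congr 1; omega
  have hmod : ((j - i) * l + r) % (k * l) = q := by
    have : i * l + q ≡ i * l + ((j - i) * l + r) [MOD k * l] := by
      rw [← add_assoc, ← Nat.add_mul, Nat.add_sub_cancel' hij]; exact hqx.trans hrx.symm
    exact Eq.trans (this.add_left_cancel' _).symm (Nat.mod_eq_of_lt (by omega))
  rcases lt_or_ge ((j - i) * l + r) (k * l) with hlt | hge
  · rw [Nat.mod_eq_of_lt hlt] at hmod
    omega
  · rw [Nat.mod_eq_sub_mod hge, Nat.mod_eq_of_lt (by omega)] at hmod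
    omega

theorem exists_lt_cycleFacet_not_subset {k : ℕ} {U : Finset ℕ} (hl : 0 < l) (hlm : l ≤ m)
    (hU : ¬ range (k * l) ⊆ U) : ∃ j < k, ¬ cycleFacet l m (k * l) j ⊆ U := by
  obtain ⟨v, hv, hvU⟩ := not_subset.1 hU
  rw [mem_range] at hv
  exact ⟨v / l, Nat.div_lt_of_lt_mul (by rwa [mul_comm]),
    fun h => hvU (h (mem_cycleFacet_div hl hlm hv))⟩

theorem cycleFacet_subset_of_mem_uIcc {k c x y z : ℕ} {U : Finset ℕ} (hmn : m ≤ k * l)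
    (hgap : ¬ cycleFacet l m (k * l) (c + (k - 1)) ⊆ U) (hx : x < k) (hy : y < k)
    (hxU : cycleFacet l m (k * l) (c + x) ⊆ U) (hyU : cycleFacet l m (k * l) (c + y) ⊆ U)
    (hxy : (cycleFacet l m (k * l) (c + x) ∩ cycleFacet l m (k * l) (c + y)).Nonempty)
    (hz : z ∈ Set.uIcc x y) : cycleFacet l m (k * l) (c + z) ⊆ U := by
  wlog hle : x ≤ y generalizing x y
  · exact this hy hx hyU hxU (by rwa [inter_comm]) (by rwa [Set.uIcc_comm]) (by omega)
  obtain ⟨hxz, hzy⟩ : x ≤ z ∧ z ≤ y := by rwa [Set.uIcc_of_le hle] at hz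
  rcases lt_or_lt_of_cycleFacet_inter_nonempty hmn (by omega : c + x ≤ c + y) (by omega) hxy
    with hshort | hlong
  · exact (cycleFacet_subset_union (by omega : c + x ≤ c + z) (by omega : c + z ≤ c + y)
      hshort.le).trans (union_subset hxU hyU)
  · -- the long way round, from `c + y` to `c + x + k`, passes the gap `c + (k - 1)`
    have hperiod : cycleFacet l m (k * l) (c + x + k) = cycleFacet l m (k * l) (c + x) :=
      cycleFacet_congr (Nat.add_mod_right _ _)
    refine absurd ((cycleFacet_subset_union (by omega : c + y ≤ c + (k - 1))
      (by omega : c + (k - 1) ≤ c + x + k) hlong.le).trans ?_) hgap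
    rw [hperiod]
    exact union_subset hyU hxU

end Facets

theorem Relation.ReflTransGen.uIcc_subset {α β : Type*} [LinearOrder β] {r : α → α → Prop}
    {f : α → β} {s : Set β} (hr : ∀ a b, r a b → Set.uIcc (f a) (f b) ⊆ s) {a b : α}
    (h : Relation.ReflTransGen r a b) (ha : f a ∈ s) : Set.uIcc (f a) (f b) ⊆ s := by
  induction h with
  | refl => simpa using ha
  | tail _ hbc ih =>
    exact Set.uIcc_subset_uIcc_union_uIcc.trans (Set.union_subset ih (hr _ _ hbc))

theorem Finset.exists_eq_image_add_range_card {s : Finset ℕ} (hs : (s : Set ℕ).OrdConnected) :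
    ∃ a, s = (range #s).image (a + ·) := by
  rcases s.eq_empty_or_nonempty with rfl | hne
  · exact ⟨0, by simp⟩
  obtain ⟨a, b, hab, rfl⟩ : ∃ a b, a ≤ b ∧ s = Icc a b := by
    refine ⟨s.min' hne, s.max' hne, min'_le _ _ (max'_mem _ _), subset_antisymm
      (fun x hx => mem_Icc.2 ⟨min'_le _ _ hx, le_max' _ _ hx⟩) fun x hx => ?_⟩
    exact_mod_cast hs.out (min'_mem _ _) (max'_mem _ _) (by simpa using hx)
  refine ⟨a, ?_⟩
  rw [Nat.card_Icc, ← Nat.Ico_zero_eq_range, image_add_left_Ico, add_zero,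
    Nat.add_sub_cancel' (by omega), Ico_add_one_right_eq_Icc]

/-- The position of the facet `F i` in the cyclic order of facets starting at `F (c + 1)`. -/
def cyclicPos (k c i : ℕ) : ℕ := (i - 1 + (k - c)) % k

section CyclicPos

variable {k c : ℕ}

theorem add_cyclicPos_modEq (hc : c ≤ k) (i : ℕ) : c + cyclicPos k c i ≡ i - 1 [MOD k] :=
  calc c + cyclicPos k c i ≡ c + (i - 1 + (k - c)) [MOD k] := (Nat.mod_modEq _ _).add_left c
    _ = i - 1 + k := by omega
    _ ≡ i - 1 [MOD k] := Nat.add_mod_right _ _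

theorem cyclicPos_add_mod_add_one (hc : c ≤ k) {x : ℕ} (hx : x < k) :
    cyclicPos k c ((c + x) % k + 1) = x :=
  calc ((c + x) % k + 1 - 1 + (k - c)) % k = (c + x + (k - c)) % k := by
        rw [Nat.add_sub_cancel, Nat.mod_add_mod]
    _ = (x + k) % k := by congr 1; omega
    _ = x := by rw [Nat.add_mod_right, Nat.mod_eq_of_lt hx]

theorem add_cyclicPos_mod_add_one (hc : c ≤ k) {i : ℕ} (hi : i ∈ Icc 1 k) :
    (c + cyclicPos k c i) % k + 1 = i := by
  rw [mem_Icc] at hi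
  rw [add_cyclicPos_modEq hc i, Nat.mod_eq_of_lt (by omega)]
  omega

end CyclicPos

section Rotation

variable {l m k c : ℕ} {U : Finset ℕ}

theorem filter_Icc_eq_image_filter_range (hc : c ≤ k) :
    (Icc 1 k).filter (fun i => cycleFacet l m (k * l) (i - 1) ⊆ U) =
      ((range k).filter fun x => cycleFacet l m (k * l) (c + x) ⊆ U).image
        fun x => (c + x) % k + 1 := by
  ext i
  simp only [mem_filter, mem_image, mem_range]
  constructor
  · rintro ⟨hi, hiU⟩
    refine ⟨cyclicPos k c i, ⟨Nat.mod_lt _ (by grind), ?_⟩,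
      add_cyclicPos_mod_add_one hc hi⟩
    rwa [cycleFacet_congr (add_cyclicPos_modEq hc i)]
  · rintro ⟨x, ⟨hx, hxU⟩, rfl⟩
    refine ⟨mem_Icc.2 ⟨by omega, Nat.mod_lt _ (by omega)⟩, ?_⟩
    rwa [Nat.add_sub_cancel, cycleFacet_congr (Nat.mod_modEq _ _)]

theorem ordConnected_filter_cycleFacet_subset {S : Finset ℕ} (hmn : m ≤ k * l) (hc : c ≤ k)
    (hgap : ¬ cycleFacet l m (k * l) (c + (k - 1)) ⊆ U)
    (hS : S = (Icc 1 k).filter fun i => cycleFacet l m (k * l) (i - 1) ⊆ U)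
    (hconn : ∀ i₁ ∈ S, ∀ i₂ ∈ S, Relation.ReflTransGen (fun A B : ℕ => A ∈ S ∧ B ∈ S ∧
      (cycleFacet l m (k * l) (A - 1) ∩ cycleFacet l m (k * l) (B - 1)).Nonempty)
      i₁ i₂) :
    (((range k).filter fun x => cycleFacet l m (k * l) (c + x) ⊆ U : Finset ℕ) :
      Set ℕ).OrdConnected := by
  set T := (range k).filter fun x => cycleFacet l m (k * l) (c + x) ⊆ U
  have hST : S = T.image fun x => (c + x) % k + 1 :=
    hS.trans (filter_Icc_eq_image_filter_range hc)
  have hpos : ∀ A ∈ S, cyclicPos k c A < k ∧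
      cycleFacet l m (k * l) (c + cyclicPos k c A) ⊆ U ∧
      cycleFacet l m (k * l) (A - 1) = cycleFacet l m (k * l) (c + cyclicPos k c A) := by
    intro A hA
    rw [hS, mem_filter, mem_Icc] at hA
    have hAeq := cycleFacet_congr (l := l) (m := m) (add_cyclicPos_modEq hc A)
    exact ⟨Nat.mod_lt _ (by omega), hAeq ▸ hA.2, hAeq.symm⟩
  refine Set.ordConnected_iff_uIcc_subset.2 fun x hx y hy => ?_
  have hxk : x < k := mem_range.1 (mem_filter.1 hx).1
  have hyk : y < k := mem_range.1 (mem_filter.1 hy).1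
  have hchain := (hconn _ (hST ▸ mem_image_of_mem _ hx) _
    (hST ▸ mem_image_of_mem _ hy)).uIcc_subset
    (f := cyclicPos k c) (s := T) ?_ (by rwa [cyclicPos_add_mod_add_one hc hxk])
  · rwa [cyclicPos_add_mod_add_one hc hxk, cyclicPos_add_mod_add_one hc hyk] at hchain
  rintro A B ⟨hA, hB, hAB⟩ z hz
  obtain ⟨hAk, hAU, hAeq⟩ := hpos A hA
  obtain ⟨hBk, hBU, hBeq⟩ := hpos B hB
  rw [hAeq, hBeq] at hAB
  have hzk : z < k := by rcases Set.mem_uIcc.1 hz with h | h <;> omega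
  exact mem_filter.2
    ⟨mem_range.2 hzk, cycleFacet_subset_of_mem_uIcc hmn hgap hAk hBk hAU hBU hAB hz⟩

end Rotation

theorem induced_connected_subcollection_is_run_general
    (l m n k : ℕ)
    (hl : 0 < l) (hmn : m ≤ n) (hln : l ∣ n)
    (hlm1 : l ≤ m - 1) (hk : k = n / l)
    (F : ℕ → Finset ℕ)
    (hF : ∀ i, F i = (Finset.range m).image fun q => ((i - 1) * l + q) % n)
    (U : Finset ℕ) (hU : U ⊂ Finset.range n)
    (S : Finset ℕ) (hS : S = (Finset.Icc 1 k).filter fun i => F i ⊆ U)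
    (hconn : ∀ i₁ ∈ S, ∀ i₂ ∈ S, Relation.ReflTransGen
      (fun A B : ℕ => A ∈ S ∧ B ∈ S ∧ (F A ∩ F B).Nonempty) i₁ i₂) :
    ∃ a p : ℕ, p < k ∧ S = (Finset.range p).image fun e => (a + e) % k + 1 := by
  obtain ⟨k', rfl⟩ := hln
  obtain rfl : k = k' := by rw [hk, Nat.mul_div_cancel_left _ hl]
  rw [mul_comm l k] at hmn hU hF
  obtain rfl : F = fun i => cycleFacet l m (k * l) (i - 1) := funext hF
  obtain ⟨j, hj, hjU⟩ := exists_lt_cycleFacet_not_subset hl (by omega : l ≤ m) hU.2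
  have hgap : ¬ cycleFacet l m (k * l) (j + 1 + (k - 1)) ⊆ U := by
    rwa [show j + 1 + (k - 1) = j + k by omega, cycleFacet_congr (Nat.add_mod_right j k)]
  set T := (range k).filter fun x => cycleFacet l m (k * l) (j + 1 + x) ⊆ U
  have hT : (T : Set ℕ).OrdConnected :=
    ordConnected_filter_cycleFacet_subset hmn (by omega) hgap hS hconn
  have hTk : #T < k := by
    refine (card_lt_card ⟨filter_subset _ _, fun h => ?_⟩).trans_eq (card_range k)
    exact hgap (mem_filter.1 (h (mem_range.2 (by omega : k - 1 < k)))).2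
  obtain ⟨a, ha⟩ := exists_eq_image_add_range_card hT
  refine ⟨j + 1 + a, #T, hTk, ?_⟩
  calc S = T.image fun x => (j + 1 + x) % k + 1 :=
        hS.trans (filter_Icc_eq_image_filter_range (by omega))
    _ = ((range #T).image (a + ·)).image fun x => (j + 1 + x) % k + 1 := by rw [← ha]
    _ = (range #T).image fun e => (j + 1 + a + e) % k + 1 := by
        simp only [image_image, Function.comp_def, add_assoc]

/-- Remark 3.7.  Let `Δ_{m,l}(C_n) = ⟨F_1, ..., F_k⟩` be the path
complex of the cycle with standard labeling (here realised on the 0-based vertex set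
`{0, ..., n-1}`, with `F i = {(i-1)*l, ..., (i-1)*l + m - 1}` mod `n` for `1 ≤ i ≤ k`).
Let `Γ` be a proper induced subcollection of `Δ_{m,l}(C_n)` on a proper subset
`U ⊊ {0, ..., n-1}`; its facet set is `{F i : F i ⊆ U}`, recorded by the index set
`S = {i ∈ [1, k] : F i ⊆ U}`.  If `Γ` is connected (any two of its facets are joined by a
chain of facets of `Γ` with consecutive ones intersecting), then `Γ` is a run, i.e. the
path complex of a line graph: its facet indices form a set of consecutive indices
(cyclically) `a+1, a+2, ..., a+p` (mod `k`) for some `a` and some `p < k`. -/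
theorem induced_connected_subcollection_is_run
    (l m n k : ℕ)
    (hl : 0 < l) (hm : 2 ≤ m) (hmn : m ≤ n) (hln : l ∣ n)
    (hlm1 : l ≤ m - 1) (hln2 : l ≤ n / 2) (hk : k = n / l)
    (F : ℕ → Finset ℕ)
    (hF : ∀ i, F i = (Finset.range m).image fun q => ((i - 1) * l + q) % n)
    (U : Finset ℕ) (hU : U ⊂ Finset.range n)
    (S : Finset ℕ) (hS : S = (Finset.Icc 1 k).filter fun i => F i ⊆ U)
    (hconn : ∀ i₁ ∈ S, ∀ i₂ ∈ S, Relation.ReflTransGen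
      (fun A B : ℕ => A ∈ S ∧ B ∈ S ∧ (F A ∩ F B).Nonempty) i₁ i₂) :
    ∃ a p : ℕ, p < k ∧ S = (Finset.range p).image fun e => (a + e) % k + 1 :=
  induced_connected_subcollection_is_run_general l m n k hl hmn hln hlm1 hk F hF U hU S hS hconn
end
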